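/- Fix γ ∈ (0,1) and ε ∈ (0,1). Let P be an arbitrary distribution over {±1}^n, let π be the law of y(x) for x ∼ P, and let T_ε π denote the law of y(x) for x ∼ T_ε P. Then for every integer ℓ ≥ 1, E_{ỹ∼T_ε π}[Kr_ℓ(ỹ)] = (1−ε)^ℓ · E_{y∼π}[Kr_ℓ(y)]. -/

import Mathlib

open MeasureTheory ProbabilityTheory

noncomputable section

/-! ### Generic statistical distances -/

/-- Total variation distance between two measures. -/
def tvDist {α : Type*} [MeasurableSpace α] (μ ν : Measure α) : ℝ :=
  ⨆ s : {s : Set α // MeasurableSet s}, |(μ s.1).toReal - (ν s.1).toReal|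

/-- `ChiSqLe D P N δ` says that the degree-`D` truncated chi-squared divergence
`χ²_D(P‖N) = Var_N[L^{≤D}]` is at most `δ`, expressed through its variational
characterization: for every polynomial `f` of degree at most `D`,
`(E_P f - E_N f)² ≤ δ · Var_N f`. -/
def ChiSqLe {ι : Type*} (D : ℕ) (P N : Measure (ι → ℝ)) (δ : ℝ) : Prop :=
  ∀ f : MvPolynomial ι ℝ, f.totalDegree ≤ D →
    (∫ x, MvPolynomial.eval x f ∂P - ∫ x, MvPolynomial.eval x f ∂N) ^ 2 ≤
      δ * ∫ x, (MvPolynomial.eval x f - ∫ y, MvPolynomial.eval y f ∂N) ^ 2 ∂N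

/-- Untruncated chi-squared divergence `χ²(P‖Q) = E_Q[(dP/dQ)²] - 1`. -/
def chiSqFull {α : Type*} [MeasurableSpace α] (P Q : Measure α) : ℝ :=
  (∫ x, ((P.rnDeriv Q x).toReal) ^ 2 ∂Q) - 1

/-! ### Bernoulli / binomial setting -/

/-- The ±1 Bernoulli measure on ℝ with `P(1) = γ`, `P(-1) = 1 - γ`. -/
def berOne (γ : ℝ) : Measure ℝ :=
  γ.toNNReal • Measure.dirac (1 : ℝ) + (1 - γ).toNNReal • Measure.dirac (-1 : ℝ)

instance (γ : ℝ) : IsFiniteMeasure (berOne γ) := by unfold berOne; infer_instance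

/-- The product measure `Ber(γ)^n` on `{±1}^n ⊆ ℝ^n`. -/
def berPi (γ : ℝ) (n : ℕ) : Measure (Fin n → ℝ) := Measure.pi fun _ => berOne γ

/-- The hypercube `{±1}^n`. -/
def pmCube (n : ℕ) : Set (Fin n → ℝ) := {x | ∀ i, x i = 1 ∨ x i = -1}

/-- `S_n`-symmetry of a distribution: invariance under relabeling of coordinates. -/
def PermInvariant {n : ℕ} (P : Measure (Fin n → ℝ)) : Prop :=
  ∀ σ : Equiv.Perm (Fin n), P.map (fun x => x ∘ σ) = P

/-- The noise operator `T_ε` (relative to `Ber(γ)`): each coordinate is kept with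
probability `1 - ε` and resampled from `Ber(γ)` with probability `ε`, independently. -/
def Tnoise (γ ε : ℝ) {n : ℕ} (P : Measure (Fin n → ℝ)) : Measure (Fin n → ℝ) :=
  P.bind fun y =>
    Measure.pi fun i => (1 - ε).toNNReal • Measure.dirac (y i) + ε.toNNReal • berOne γ

/-- The centered, normalized sum `y(x) = (1/(2√(nγ(1-γ)))) Σ_i (x_i - (2γ-1))`. -/
def yval (γ : ℝ) {n : ℕ} (x : Fin n → ℝ) : ℝ :=
  (1 / (2 * Real.sqrt (n * (γ * (1 - γ))))) * ∑ i, (x i - (2 * γ - 1))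

/-! ### Krawtchouk polynomials -/

/-- `χ_S(x) = ∏_{i ∈ S} (x_i - (2γ-1))/(2√(γ(1-γ)))`. -/
def chiSet (γ : ℝ) {n : ℕ} (S : Finset (Fin n)) (x : Fin n → ℝ) : ℝ :=
  ∏ i ∈ S, (x i - (2 * γ - 1)) / (2 * Real.sqrt (γ * (1 - γ)))

/-- `s_k(x) = Σ_{|S| = k} χ_S(x)`. -/
def sElem (γ : ℝ) {n : ℕ} (k : ℕ) (x : Fin n → ℝ) : ℝ :=
  ∑ S ∈ Finset.powersetCard k (Finset.univ : Finset (Fin n)), chiSet γ S x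

/-- `Kr` is the (shifted, normalized) degree-`k` Krawtchouk polynomial for parameters
`n, γ`: it has degree at most `k` and satisfies `Kr(y(x)) = C(n,k)^{-1/2} s_k(x)`
for every `x ∈ {±1}^n`. -/
def IsKrawtchouk (γ : ℝ) (n k : ℕ) (Kr : Polynomial ℝ) : Prop :=
  Kr.natDegree ≤ k ∧
    ∀ x ∈ pmCube n, Kr.eval (yval γ x) = (Real.sqrt (n.choose k))⁻¹ * sElem γ k x

/-! ### Gaussian vector setting -/

/-- The standard Gaussian measure `N(0, I_n)` on `ℝ^n`. -/
def stdGaussPi (n : ℕ) : Measure (Fin n → ℝ) := Measure.pi fun _ => gaussianReal 0 1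

/-- The Ornstein–Uhlenbeck noise operator: the law of `√(1-ε)·y + √ε·g`. -/
def OU (ε : ℝ) {n : ℕ} (P : Measure (Fin n → ℝ)) : Measure (Fin n → ℝ) :=
  P.bind fun y =>
    (stdGaussPi n).map fun g i => Real.sqrt (1 - ε) * y i + Real.sqrt ε * g i

/-- The normalized probabilist's Hermite polynomial `h_ℓ = He_ℓ / √(ℓ!)`. -/
def hermiteN (ℓ : ℕ) (x : ℝ) : ℝ :=
  (Polynomial.aeval x (Polynomial.hermite ℓ)) / Real.sqrt (Nat.factorial ℓ)

/-- `F_k : ℝ^n → ℝ^k`, `(F_k(x))_i = n^{-1/2} Σ_j h_i(x_j)` for `i = 1, …, k`. -/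
def Fk (n k : ℕ) (x : Fin n → ℝ) : Fin k → ℝ :=
  fun i => (Real.sqrt n)⁻¹ * ∑ j, hermiteN (i.1 + 1) (x j)

/-- `ν_k`: law of `F_k(x)` for `x ∼ N(0, I_n)`. -/
def nuK (n k : ℕ) : Measure (Fin k → ℝ) := (stdGaussPi n).map (Fk n k)

/-- `π_{k,ε}`: law of `F_k(x)` for `x ∼ OU_ε P`. -/
def piK (n k : ℕ) (ε : ℝ) (P : Measure (Fin n → ℝ)) : Measure (Fin k → ℝ) :=
  (OU ε P).map (Fk n k)

/-- A univariate polynomial is a sum of squares. -/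
def IsSOS (p : Polynomial ℝ) : Prop :=
  ∃ (m : ℕ) (q : Fin m → Polynomial ℝ), p = ∑ i, (q i) ^ 2

/-- The set of `ℓ`-regular points of `ℝ^n`. -/
def regularSet (n ℓ : ℕ) : Set (Fin n → ℝ) :=
  {y | ∀ p : Polynomial ℝ, p.natDegree ≤ 2 * ℓ → IsSOS p →
    (1 / 2) * (∫ g, p.eval g ∂(gaussianReal 0 1)) ≤ ((n : ℝ))⁻¹ * ∑ i, p.eval (y i) ∧
    ((n : ℝ))⁻¹ * ∑ i, p.eval (y i) ≤ (3 / 2) * ∫ g, p.eval g ∂(gaussianReal 0 1)}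

/-- `π'_{k,ε}`: law of `F_k(x)` for `x ∼ OU_ε P'` where `P'` is `P` conditioned
on the set of `4k`-regular points. -/
def piK' (n k : ℕ) (ε : ℝ) (P : Measure (Fin n → ℝ)) : Measure (Fin k → ℝ) :=
  (OU ε (ProbabilityTheory.cond P (regularSet n (4 * k)))).map (Fk n k)

/-- Euclidean norm on `ℝ^k` (written out, since the `Pi` norm is the sup norm). -/
def euclNorm {k : ℕ} (ξ : Fin k → ℝ) : ℝ := Real.sqrt (∑ i, (ξ i) ^ 2)

/-- Characteristic function (Fourier transform) of a measure on `ℝ^k`. -/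
def charFn {k : ℕ} (μ : Measure (Fin k → ℝ)) (ξ : Fin k → ℝ) : ℂ :=
  ∫ x, Complex.exp (Complex.I * ((∑ i, ξ i * x i : ℝ) : ℂ)) ∂μ

/-! ### Gaussian matrix setting and subgraph counts -/

/-- The edges of a graph on `Fin v`, as ordered pairs `(a, b)` with `a < b`. -/
def edgePairs {v : ℕ} (θ : SimpleGraph (Fin v)) : Finset (Fin v × Fin v) :=
  @Finset.filter _ (fun p => p.1 < p.2 ∧ θ.Adj p.1 p.2) (Classical.decPred _) Finset.univ

/-- Number of edges `e(θ)`. -/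
def edgeCount {v : ℕ} (θ : SimpleGraph (Fin v)) : ℕ := (edgePairs θ).card

/-- Number of automorphisms of the graph `θ`. -/
def numAut {v : ℕ} (θ : SimpleGraph (Fin v)) : ℕ :=
  Nat.card {e : Equiv.Perm (Fin v) // ∀ a b, θ.Adj (e a) (e b) ↔ θ.Adj a b}

/-- The injective maps `Fin v → Fin n`. -/
def injFuns (v n : ℕ) : Finset (Fin v → Fin n) :=
  @Finset.filter _ (fun f => Function.Injective f) (Classical.decPred _) Finset.univ

/-- The signed subgraph count `χ_θ(M) = |L_θ|^{-1/2} Σ_{π ∈ L_θ} ∏_{ab ∈ E(θ)} M_{π(a)π(b)}`,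
where `|L_θ| = #inj/#aut` and the sum over distinct labelings is realized as
`(#aut)⁻¹` times the sum over all injective labelings. -/
def subCount {v : ℕ} (θ : SimpleGraph (Fin v)) {n : ℕ} (M : Fin n × Fin n → ℝ) : ℝ :=
  (Real.sqrt (((injFuns v n).card : ℝ) / (numAut θ : ℝ)))⁻¹ *
    ((numAut θ : ℝ)⁻¹ * ∑ f ∈ injFuns v n, ∏ p ∈ edgePairs θ, M (f p.1, f p.2))

/-- The GOE-type law `N`: symmetric `n × n` matrix (as a function on `Fin n × Fin n`)
with i.i.d. `N(0,1)` entries on and above the diagonal. -/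
def matGauss (n : ℕ) : Measure (Fin n × Fin n → ℝ) :=
  (Measure.pi fun _ : {p : Fin n × Fin n // p.1 ≤ p.2} => gaussianReal 0 1).map
    fun u p => if h : p.1 ≤ p.2 then u ⟨p, h⟩ else u ⟨(p.2, p.1), le_of_not_ge h⟩

/-- The set of symmetric matrices. -/
def symmMatSet (n : ℕ) : Set (Fin n × Fin n → ℝ) := {M | ∀ p, M p = M (p.2, p.1)}

/-- Ornstein–Uhlenbeck noise for matrices: the law of `√(1-ε)·M + √ε·G`. -/
def OUMat {n : ℕ} (ε : ℝ) (P : Measure (Fin n × Fin n → ℝ)) : Measure (Fin n × Fin n → ℝ) :=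
  P.bind fun M => (matGauss n).map fun G p => Real.sqrt (1 - ε) * M p + Real.sqrt ε * G p

/-- `σ̃²(M) = max{Var_{G∼N}[χ_θ(√(1-ε)M + √εG)], (ε/2)(1-ε)^{e(θ)-1}}`. -/
def tildeSig2 {v : ℕ} (θ : SimpleGraph (Fin v)) {n : ℕ} (ε : ℝ)
    (M : Fin n × Fin n → ℝ) : ℝ :=
  max
    (∫ G, (subCount θ (fun p => Real.sqrt (1 - ε) * M p + Real.sqrt ε * G p) -
        ∫ G', subCount θ (fun p => Real.sqrt (1 - ε) * M p + Real.sqrt ε * G' p)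
          ∂(matGauss n)) ^ 2 ∂(matGauss n))
    (ε / 2 * (1 - ε) ^ (edgeCount θ - 1))

/-- The smoothed law `π̲_θ` (resp. `ν̲_θ`): law of
`(1-ε)^{e(θ)/2} χ_θ(M) + σ̃(M)·g` with `M ∼ P` and `g ∼ N(0,1)` independent. -/
def smoothedLaw {v : ℕ} (θ : SimpleGraph (Fin v)) {n : ℕ} (ε : ℝ)
    (P : Measure (Fin n × Fin n → ℝ)) : Measure ℝ :=
  P.bind fun M => (gaussianReal 0 1).map fun g =>
    Real.sqrt ((1 - ε) ^ edgeCount θ) * subCount θ M + Real.sqrt (tildeSig2 θ ε M) * g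

/-- `ν_θ`: law of `χ_θ(M)` for `M ∼ N`. -/
def nuTheta {v : ℕ} (θ : SimpleGraph (Fin v)) (n : ℕ) : Measure ℝ :=
  (matGauss n).map (subCount θ (n := n))

/-- `π_θ`: law of `χ_θ(M)` for `M ∼ OU_ε P`. -/
def piTheta {v : ℕ} (θ : SimpleGraph (Fin v)) {n : ℕ} (ε : ℝ)
    (P : Measure (Fin n × Fin n → ℝ)) : Measure ℝ :=
  (OUMat ε P).map (subCount θ)

/-! ### Gaussian one-dimensional helpers -/

/-- Mean of `p(g)` for `g ∼ N(0,1)`. -/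
def gaussMean (p : Polynomial ℝ) : ℝ := ∫ g, p.eval g ∂(gaussianReal 0 1)

/-- Variance of `p(g)` for `g ∼ N(0,1)`. -/
def gaussVar (p : Polynomial ℝ) : ℝ :=
  ∫ g, (p.eval g - gaussMean p) ^ 2 ∂(gaussianReal 0 1)

/-- `E_{g∼N(0,1)}[exp(i p(g))]`. -/
def gaussCharPoly (p : Polynomial ℝ) : ℂ :=
  ∫ g, Complex.exp (Complex.I * ((p.eval g : ℝ) : ℂ)) ∂(gaussianReal 0 1)


open scoped NNReal ENNReal

namespace Stmt4Aux

def wvec (γ ε : ℝ) : Fin 3 → ℝ≥0 :=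
  ![(1 - ε).toNNReal, ε.toNNReal * γ.toNNReal, ε.toNNReal * (1 - γ).toNNReal]

def pvec (t : ℝ) : Fin 3 → ℝ := ![t, 1, -1]

lemma coord_eq (γ ε t : ℝ) :
    (1 - ε).toNNReal • Measure.dirac t + ε.toNNReal • berOne γ
      = ∑ j : Fin 3, wvec γ ε j • Measure.dirac (pvec t j) := by
  rw [Fin.sum_univ_three]
  simp only [wvec, pvec, berOne, Matrix.cons_val_zero, Matrix.cons_val_one, Matrix.head_cons,
    Matrix.cons_val_two, Matrix.tail_cons, smul_add, mul_smul]
  rw [add_assoc]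

lemma nnreal_smul_measure {α : Type*} [MeasurableSpace α] (c : ℝ≥0) (μ : Measure α) :
    c • μ = (c : ℝ≥0∞) • μ := rfl

lemma sum_dirac_apply {α : Type*} [MeasurableSpace α] {ι : Type*} [Fintype ι]
    (w : ι → ℝ≥0) (p : ι → α) {s : Set α} (hs : MeasurableSet s) :
    (∑ j : ι, w j • Measure.dirac (p j)) s = ∑ j : ι, (w j : ℝ≥0∞) * s.indicator 1 (p j) := by
  rw [Measure.finset_sum_apply]
  refine Finset.sum_congr rfl fun j _ => ?_
  rw [Measure.smul_apply, Measure.dirac_apply' _ hs, ENNReal.smul_def, smul_eq_mul]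

instance sum_dirac_finite {α : Type*} [MeasurableSpace α] {ι : Type*} [Fintype ι]
    (w : ι → ℝ≥0) (p : ι → α) : IsFiniteMeasure (∑ j : ι, w j • Measure.dirac (p j)) := by
  constructor
  rw [sum_dirac_apply w p MeasurableSet.univ]
  refine ENNReal.sum_lt_top.2 fun j _ => ?_
  exact by
    simpa using ENNReal.mul_lt_top ENNReal.coe_lt_top (by simp [Set.indicator])

set_option maxHeartbeats 1000000 in
lemma pi_sum_dirac {n : ℕ} (w : Fin 3 → ℝ≥0) (q : Fin n → Fin 3 → ℝ) :
    (Measure.pi fun i => ∑ j : Fin 3, w j • Measure.dirac (q i j))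
      = ∑ c : Fin n → Fin 3, (∏ i, w (c i)) • Measure.dirac (fun i => q i (c i)) := by
  refine Measure.pi_eq fun s hs => ?_
  have hps : MeasurableSet (Set.pi Set.univ s) := MeasurableSet.univ_pi hs
  rw [Measure.finset_sum_apply]
  have hind : ∀ x : Fin n → ℝ,
      (Set.pi Set.univ s).indicator (1 : (Fin n → ℝ) → ℝ≥0∞) x
        = ∏ i, (s i).indicator 1 (x i) := by
    intro x
    by_cases hx : x ∈ Set.pi Set.univ s
    · rw [Set.indicator_of_mem hx]
      rw [Set.mem_univ_pi] at hx
      simp [Set.indicator_of_mem (hx _)]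
    · rw [Set.indicator_of_notMem hx]
      rw [Set.mem_univ_pi] at hx; push_neg at hx
      obtain ⟨i, hi⟩ := hx
      rw [eq_comm]
      exact Finset.prod_eq_zero (Finset.mem_univ i) (by simp [Set.indicator_of_notMem hi])
  calc
    ∑ c : Fin n → Fin 3, ((∏ i, w (c i)) • Measure.dirac (fun i => q i (c i))) (Set.pi Set.univ s)
        = ∑ c : Fin n → Fin 3, ∏ i, ((w (c i) : ℝ≥0∞) * (s i).indicator 1 (q i (c i))) := by
          refine Finset.sum_congr rfl fun c _ => ?_
          rw [Measure.smul_apply, Measure.dirac_apply' _ hps, ENNReal.smul_def, smul_eq_mul, hind,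
            Finset.prod_mul_distrib]
          push_cast
          ring
    _ = ∏ i, ∑ j : Fin 3, ((w j : ℝ≥0∞) * (s i).indicator 1 (q i j)) :=
          (Fintype.prod_sum (fun i (j : Fin 3) => (w j : ℝ≥0∞) * (s i).indicator 1 (q i j))).symm
    _ = ∏ i, (∑ j : Fin 3, w j • Measure.dirac (q i j)) (s i) := by
          refine Finset.prod_congr rfl fun i _ => ?_
          rw [sum_dirac_apply w _ (hs i)]

lemma bind_sum_dirac {n : ℕ} (P : Measure (Fin n → ℝ))
    (W : (Fin n → Fin 3) → ℝ≥0) (m : (Fin n → Fin 3) → (Fin n → ℝ) → (Fin n → ℝ))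
    (hm : ∀ c, Measurable (m c)) :
    P.bind (fun y => ∑ c : Fin n → Fin 3, W c • Measure.dirac (m c y))
      = ∑ c : Fin n → Fin 3, W c • P.map (m c) := by
  have hker : Measurable (fun y => ∑ c : Fin n → Fin 3, W c • Measure.dirac (m c y)) := by
    apply Measure.measurable_of_measurable_coe
    intro s hs
    simp only [sum_dirac_apply _ _ hs]
    refine Finset.measurable_sum _ fun c _ => ?_
    exact ((measurable_const.indicator hs).comp (hm c)).const_mul _
  ext s hs
  rw [Measure.bind_apply hs hker.aemeasurable]
  have : ∀ y, (∑ c : Fin n → Fin 3, W c • Measure.dirac (m c (y : Fin n → ℝ))) s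
      = ∑ c : Fin n → Fin 3, (W c : ℝ≥0∞) * Set.indicator (m c ⁻¹' s) 1 y := by
    intro y
    rw [sum_dirac_apply _ _ hs]
    refine Finset.sum_congr rfl fun c _ => ?_
    congr 1
  simp only [this]
  rw [lintegral_finset_sum (f := fun c y => (W c : ℝ≥0∞) * (m c ⁻¹' s).indicator 1 y) Finset.univ
    (fun c _ => ((measurable_const.indicator ((hm c) hs)).const_mul _)),
    Measure.finset_sum_apply]
  refine Finset.sum_congr rfl fun c _ => ?_
  rw [lintegral_const_mul' _ _ ENNReal.coe_ne_top,
    lintegral_indicator_one ((hm c) hs), Measure.smul_apply,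
    Measure.map_apply (hm c) hs, ENNReal.smul_def, smul_eq_mul]


lemma pvec_mem {t : ℝ} (ht : t = 1 ∨ t = -1) (j : Fin 3) : pvec t j = 1 ∨ pvec t j = -1 := by
  fin_cases j <;> simp [pvec] <;> tauto

lemma pointwise_sum (γ ε : ℝ) (hγ0 : 0 < γ) (hγ1 : γ < 1) (hε0 : 0 ≤ ε) (hε1 : ε ≤ 1)
    {n : ℕ} (ℓ : ℕ) (Kr : Polynomial ℝ) (hKr : IsKrawtchouk γ n ℓ Kr)
    (y : Fin n → ℝ) (hy : y ∈ pmCube n) :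
    ∑ c : Fin n → Fin 3,
        (∏ i, (wvec γ ε (c i) : ℝ)) * Kr.eval (yval γ (fun i => pvec (y i) (c i)))
      = (1 - ε) ^ ℓ * Kr.eval (yval γ y) := by
  set G : ℝ → ℝ := fun t => (t - (2 * γ - 1)) / (2 * Real.sqrt (γ * (1 - γ))) with hG
  have hw0 : ((wvec γ ε 0 : ℝ≥0) : ℝ) = 1 - ε := by
    rw [show wvec γ ε 0 = (1 - ε).toNNReal from rfl, Real.coe_toNNReal _ (by linarith)]
  have hw1 : ((wvec γ ε 1 : ℝ≥0) : ℝ) = ε * γ := by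
    rw [show wvec γ ε 1 = ε.toNNReal * γ.toNNReal from rfl, NNReal.coe_mul,
      Real.coe_toNNReal _ hε0, Real.coe_toNNReal _ hγ0.le]
  have hw2 : ((wvec γ ε 2 : ℝ≥0) : ℝ) = ε * (1 - γ) := by
    rw [show wvec γ ε 2 = ε.toNNReal * (1 - γ).toNNReal from rfl, NNReal.coe_mul,
      Real.coe_toNNReal _ hε0, Real.coe_toNNReal _ (by linarith)]
  have hmem : ∀ c : Fin n → Fin 3, (fun i => pvec (y i) (c i)) ∈ pmCube n :=
    fun c i => pvec_mem (hy i) (c i)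
  have hchi : ∀ (S : Finset (Fin n)) (x : Fin n → ℝ), chiSet γ S x = ∏ i ∈ S, G (x i) := by
    intro S x; rfl
  have hinner : ∀ S ∈ Finset.powersetCard ℓ (Finset.univ : Finset (Fin n)),
      (∑ c : Fin n → Fin 3, (∏ i, (wvec γ ε (c i) : ℝ)) * ∏ i ∈ S, G (pvec (y i) (c i)))
        = (1 - ε) ^ ℓ * ∏ i ∈ S, G (y i) := by
    intro S hS
    obtain ⟨-, hcard⟩ := Finset.mem_powersetCard.mp hS
    calc
      (∑ c : Fin n → Fin 3, (∏ i, (wvec γ ε (c i) : ℝ)) * ∏ i ∈ S, G (pvec (y i) (c i)))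
          = ∑ c : Fin n → Fin 3,
              ∏ i, ((wvec γ ε (c i) : ℝ) * (if i ∈ S then G (pvec (y i) (c i)) else 1)) := by
            refine Finset.sum_congr rfl fun c _ => ?_
            rw [Finset.prod_mul_distrib, Fintype.prod_extend_by_one]
      _ = ∏ i, ∑ j : Fin 3, ((wvec γ ε j : ℝ) * (if i ∈ S then G (pvec (y i) j) else 1)) :=
            (Fintype.prod_sum
              (fun i (j : Fin 3) => (wvec γ ε j : ℝ) * (if i ∈ S then G (pvec (y i) j) else 1))).symm
      _ = ∏ i, (if i ∈ S then (1 - ε) * G (y i) else 1) := by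
            refine Finset.prod_congr rfl fun i _ => ?_
            by_cases hiS : i ∈ S
            · simp only [hiS, if_true, Fin.sum_univ_three, hw0, hw1, hw2]
              have h1 : pvec (y i) 0 = y i := rfl
              have h2 : pvec (y i) 1 = 1 := rfl
              have h3 : pvec (y i) 2 = -1 := rfl
              rw [h1, h2, h3]
              simp only [hG]
              ring
            · simp only [hiS, if_false, mul_one, Fin.sum_univ_three, hw0, hw1, hw2]
              ring
      _ = ∏ i ∈ S, ((1 - ε) * G (y i)) := Fintype.prod_extend_by_one S _
      _ = (1 - ε) ^ ℓ * ∏ i ∈ S, G (y i) := by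
            rw [Finset.prod_mul_distrib, Finset.prod_const, hcard]
  calc
    ∑ c : Fin n → Fin 3,
        (∏ i, (wvec γ ε (c i) : ℝ)) * Kr.eval (yval γ (fun i => pvec (y i) (c i)))
      = ∑ c : Fin n → Fin 3, ∑ S ∈ Finset.powersetCard ℓ (Finset.univ : Finset (Fin n)),
          (Real.sqrt (n.choose ℓ))⁻¹ *
            ((∏ i, (wvec γ ε (c i) : ℝ)) * ∏ i ∈ S, G (pvec (y i) (c i))) := by
        refine Finset.sum_congr rfl fun c _ => ?_
        rw [hKr.2 _ (hmem c)]
        unfold sElem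
        simp only [hchi]
        rw [Finset.mul_sum, Finset.mul_sum]
        exact Finset.sum_congr rfl fun S _ => by ring
    _ = ∑ S ∈ Finset.powersetCard ℓ (Finset.univ : Finset (Fin n)), ∑ c : Fin n → Fin 3,
          (Real.sqrt (n.choose ℓ))⁻¹ *
            ((∏ i, (wvec γ ε (c i) : ℝ)) * ∏ i ∈ S, G (pvec (y i) (c i))) := Finset.sum_comm
    _ = ∑ S ∈ Finset.powersetCard ℓ (Finset.univ : Finset (Fin n)),
          (Real.sqrt (n.choose ℓ))⁻¹ * ((1 - ε) ^ ℓ * ∏ i ∈ S, G (y i)) := by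
        refine Finset.sum_congr rfl fun S hS => ?_
        rw [← Finset.mul_sum, hinner S hS]
    _ = (1 - ε) ^ ℓ * Kr.eval (yval γ y) := by
        rw [hKr.2 y hy]
        unfold sElem
        simp only [hchi]
        rw [Finset.mul_sum, Finset.mul_sum]
        exact Finset.sum_congr rfl fun S _ => by ring

end Stmt4Aux

theorem stmt4 (γ ε : ℝ) (hγ : γ ∈ Set.Ioo (0 : ℝ) 1) (hε : ε ∈ Set.Ioo (0 : ℝ) 1)
    (n : ℕ) (P : Measure (Fin n → ℝ)) [IsProbabilityMeasure P]
    (hsupp : P (pmCube n) = 1)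
    (ℓ : ℕ) (hℓ : 1 ≤ ℓ) (Kr : Polynomial ℝ) (hKr : IsKrawtchouk γ n ℓ Kr) :
    ∫ y, Kr.eval y ∂((Tnoise γ ε P).map (yval γ)) =
      (1 - ε) ^ ℓ * ∫ y, Kr.eval y ∂(P.map (yval γ)) := by
  obtain ⟨hγ0, hγ1⟩ := hγ
  obtain ⟨hε0, hε1⟩ := hε
  have hyval : Measurable (yval γ (n := n)) := by
    unfold yval
    exact (Finset.measurable_sum _ fun i _ =>
      (measurable_pi_apply i).sub measurable_const).const_mul _
  have hf : Measurable fun x : Fin n → ℝ => Kr.eval (yval γ x) :=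
    Kr.continuous.measurable.comp hyval
  have hcube : MeasurableSet (pmCube n) := by
    have hset : pmCube n = ⋂ i, (fun x : Fin n → ℝ => x i) ⁻¹' {1, -1} := by
      ext x; simp [pmCube, Set.mem_iInter]
    rw [hset]
    exact MeasurableSet.iInter fun i =>
      (measurable_pi_apply i) ((measurableSet_singleton 1).union (measurableSet_singleton (-1)))
  have hae : ∀ᵐ y ∂P, y ∈ pmCube n := by
    have h := measure_compl hcube (measure_ne_top P _)
    rw [hsupp, measure_univ, tsub_self] at h
    rw [MeasureTheory.ae_iff]
    exact h
  set m : (Fin n → Fin 3) → (Fin n → ℝ) → (Fin n → ℝ) :=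
    fun c y i => Stmt4Aux.pvec (y i) (c i) with hm_def
  have hm : ∀ c : Fin n → Fin 3, Measurable (m c) := by
    intro c
    refine measurable_pi_lambda _ fun i => ?_
    have h3 : ∀ j : Fin 3, Measurable (fun y : Fin n → ℝ => Stmt4Aux.pvec (y i) j) := by
      intro j
      fin_cases j
      · simpa [Stmt4Aux.pvec] using measurable_pi_apply i
      · simp [Stmt4Aux.pvec]
      · simp [Stmt4Aux.pvec]
    exact h3 (c i)
  have hmcube : ∀ (c : Fin n → Fin 3), ∀ y ∈ pmCube n, m c y ∈ pmCube n :=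
    fun c y hy i => Stmt4Aux.pvec_mem (hy i) (c i)
  have hT : Tnoise γ ε P
      = ∑ c : Fin n → Fin 3, (∏ i, Stmt4Aux.wvec γ ε (c i)) • P.map (m c) := by
    have h1 : (fun y : Fin n → ℝ => Measure.pi fun i =>
        (1 - ε).toNNReal • Measure.dirac (y i) + ε.toNNReal • berOne γ)
        = fun y => ∑ c : Fin n → Fin 3,
            (∏ i, Stmt4Aux.wvec γ ε (c i)) • Measure.dirac (m c y) := by
      funext y
      calc (Measure.pi fun i =>
              (1 - ε).toNNReal • Measure.dirac (y i) + ε.toNNReal • berOne γ)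
          = Measure.pi fun i => ∑ j : Fin 3,
              Stmt4Aux.wvec γ ε j • Measure.dirac (Stmt4Aux.pvec (y i) j) := by
            congr 1; funext i; exact Stmt4Aux.coord_eq γ ε (y i)
        _ = _ := Stmt4Aux.pi_sum_dirac _ _
    rw [Tnoise, h1, Stmt4Aux.bind_sum_dirac P _ m hm]
  -- bound
  set C : ℝ := |1 / (2 * Real.sqrt (n * (γ * (1 - γ))))| * (2 * n) with hCdef
  have hyvalC : ∀ x ∈ pmCube n, yval γ x ∈ Set.Icc (-C) C := by
    intro x hx
    rw [Set.mem_Icc, ← abs_le]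
    unfold yval
    rw [abs_mul]
    refine mul_le_mul_of_nonneg_left ?_ (abs_nonneg _)
    calc |∑ i, (x i - (2 * γ - 1))| ≤ ∑ i, |x i - (2 * γ - 1)| :=
          Finset.abs_sum_le_sum_abs _ _
      _ ≤ ∑ _i : Fin n, 2 := by
          refine Finset.sum_le_sum fun i _ => ?_
          rcases hx i with h | h <;> rw [h, abs_le] <;> constructor <;> nlinarith
      _ = 2 * n := by simp [Finset.sum_const, mul_comm]
  obtain ⟨B, hB⟩ := (isCompact_Icc (a := -C) (b := C)).exists_bound_of_continuousOn
    Kr.continuous.continuousOn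
  have hB' : ∀ x ∈ pmCube n, ‖Kr.eval (yval γ x)‖ ≤ B :=
    fun x hx => hB _ (hyvalC x hx)
  have hintc : ∀ c : Fin n → Fin 3,
      Integrable (fun x => Kr.eval (yval γ x)) (P.map (m c)) := by
    intro c
    haveI := Measure.isProbabilityMeasure_map (μ := P) (hm c).aemeasurable
    have haec : ∀ᵐ x ∂(P.map (m c)), x ∈ pmCube n := by
      rw [ae_map_iff (p := (· ∈ pmCube n)) (hm c).aemeasurable hcube]
      exact hae.mono fun y hy => hmcube c y hy
    exact (integrable_const B).mono' hf.aestronglyMeasurable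
      (haec.mono fun x hx => hB' x hx)
  have hcomp : ∀ c : Fin n → Fin 3,
      Integrable (fun y => Kr.eval (yval γ (m c y))) P := fun c =>
    (integrable_map_measure hf.aestronglyMeasurable (hm c).aemeasurable).mp (hintc c)
  have hL : ∫ y, Kr.eval y ∂((Tnoise γ ε P).map (yval γ))
      = ∫ x, Kr.eval (yval γ x) ∂(Tnoise γ ε P) :=
    integral_map hyval.aemeasurable Kr.continuous.aestronglyMeasurable
  have hR : ∫ y, Kr.eval y ∂(P.map (yval γ)) = ∫ x, Kr.eval (yval γ x) ∂P :=
    integral_map hyval.aemeasurable Kr.continuous.aestronglyMeasurable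
  rw [hL, hR]
  calc ∫ x, Kr.eval (yval γ x) ∂(Tnoise γ ε P)
      = ∑ c : Fin n → Fin 3, ∫ x, Kr.eval (yval γ x)
          ∂((((∏ i, Stmt4Aux.wvec γ ε (c i) : ℝ≥0)) : ℝ≥0∞) • P.map (m c)) := by
        rw [hT]
        simp only [Stmt4Aux.nnreal_smul_measure]
        exact integral_finset_sum_measure fun c _ =>
          ((hintc c).smul_measure ENNReal.coe_ne_top)
    _ = ∑ c : Fin n → Fin 3, (∏ i, (Stmt4Aux.wvec γ ε (c i) : ℝ)) *
          ∫ y, Kr.eval (yval γ (m c y)) ∂P := by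
        refine Finset.sum_congr rfl fun c _ => ?_
        rw [integral_smul_measure, integral_map (hm c).aemeasurable hf.aestronglyMeasurable]
        rw [ENNReal.coe_toReal, NNReal.coe_prod, smul_eq_mul]
    _ = ∫ y, ∑ c : Fin n → Fin 3, (∏ i, (Stmt4Aux.wvec γ ε (c i) : ℝ)) *
          Kr.eval (yval γ (m c y)) ∂P := by
        rw [integral_finset_sum _ fun c _ => (hcomp c).const_mul _]
        exact Finset.sum_congr rfl fun c _ => (integral_const_mul _ _).symm
    _ = ∫ y, (1 - ε) ^ ℓ * Kr.eval (yval γ y) ∂P := by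
        refine integral_congr_ae (hae.mono fun y hy => ?_)
        exact Stmt4Aux.pointwise_sum γ ε hγ0 hγ1 hε0.le hε1.le ℓ Kr hKr y hy
    _ = (1 - ε) ^ ℓ * ∫ x, Kr.eval (yval γ x) ∂P := integral_const_mul _ _

end
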